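/- arXiv:2009.02237 — 6 statements merged into one kernel-verified Lean document; each statement's English description precedes it below -/
import Mathlib

section
/- Let q₁,…,qₘ, p be prime powers with ∏ᵢ qᵢ coprime to p, let K = ∏ᵢ F_{qᵢ}, let C be an (F_p, K)-linearly closed clonoid, and let g ∈ C^[1] be 0-absorbing in [m]. For each k ≥ 1 define t_k : ∏ᵢ F_{qᵢ}^k → F_p by t_k(λ₁e₁,…,λₘe₁) = g(λ₁,…,λₘ) for all λᵢ ∈ F_{qᵢ}, and t_k(x) = 0 for all other x. Then t_k is 0-absorbing in [m] and t_k belongs to the (F_p, K)-linearly closed clonoid generated by C^[1], for every k ∈ ℕ. -/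
/-- `C` is an `(F, K)`-linearly closed clonoid: a nonempty set of finitary functions
`∏ᵢ Kᵢⁿ → F` closed under `F`-linear combinations and under precomposition with tuples
of `Kᵢ`-linear maps (given by matrices). -/
def IsLCC {m : ℕ} (K : Fin m → Type*) [∀ i, Field (K i)] (F : Type*) [CommRing F]
    (C : ∀ n : ℕ, Set ((∀ i, Fin n → K i) → F)) : Prop :=
  (∃ n, (C n).Nonempty) ∧
  (∀ (n : ℕ) (a b : F) (f g : (∀ i, Fin n → K i) → F), f ∈ C n → g ∈ C n →
    (fun x => a * f x + b * g x) ∈ C n) ∧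
  (∀ (n l : ℕ) (f : (∀ i, Fin n → K i) → F), f ∈ C n →
    ∀ A : ∀ i, Matrix (Fin n) (Fin l) (K i),
      (fun x : ∀ i, Fin l → K i => f (fun i => (A i).mulVec (x i))) ∈ C l)

/-- The `(F, K)`-linearly closed clonoid generated by a set `S` of unary functions. -/
def ClgU {m : ℕ} (K : Fin m → Type*) [∀ i, Field (K i)] (F : Type*) [CommRing F]
    (S : Set ((∀ i, Fin 1 → K i) → F)) : ∀ n : ℕ, Set ((∀ i, Fin n → K i) → F) :=
  fun n => {f | ∀ C, IsLCC K F C → S ⊆ C 1 → f ∈ C n}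

/-!
Let `N` be the number of tails `(aᵢⱼ)_{j ≥ 1}` of `a ∈ ∏ᵢ Kᵢ^(n+1)`; it is a power of `∏ᵢ |Kᵢ|`,
hence a unit of `F_p`, and
`N · t(x) = ∑ₐ ∏ᵢ ([aᵢ₀ = 1] - [aᵢ₀ = 0]) · g(a₁ ⬝ x₁, …, aₘ ⬝ xₘ)`,
a linear combination of `g` composed with linear forms. On the first axis `x = λ e₁` the sum
depends only on the heads `aᵢ₀`, and the weights together with `0`-absorption of `g` kill every
head except `(1, …, 1)`.
Off the axis some `x i₀ j ≠ 0` with `j ≠ 0`; translating `a i₀` along a vector orthogonal to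
`x i₀` with head `1` turns `[a i₀ 0 = 1]` into `[a i₀ 0 = 0]` without changing the terms `g(…)`,
so the sum cancels. `0`-absorption of `t` follows from the same identity.
-/

open Finset Matrix

theorem FiniteField.natCast_ne_zero_of_coprime {F : Type*} [Field F] [Fintype F] {N : ℕ}
    (h : N.Coprime (Fintype.card F)) : (N : F) ≠ 0 := by
  intro hN
  obtain ⟨u, v, huv⟩ := Nat.isCoprime_iff_coprime.mpr h
  have := congrArg (Int.cast : ℤ → F) huv
  push_cast at this
  rw [hN, FiniteField.cast_card_eq_zero] at this
  simp at this

theorem Fintype.sum_comp_apply_zero {ι : Type*} [Fintype ι] [DecidableEq ι] {α : ι → Type*}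
    [∀ i, Fintype (α i)] {M : Type*} [AddCommMonoid M] (n : ℕ) (Φ : (∀ i, α i) → M) :
    ∑ a : ∀ i, Fin (n + 1) → α i, Φ (fun i => a i 0)
      = Fintype.card (∀ i, Fin n → α i) • ∑ h, Φ h := by
  let e : (∀ i, α i) × (∀ i, Fin n → α i) ≃ ∀ i, Fin (n + 1) → α i :=
    (Equiv.arrowProdEquivProdArrow _ _ _).symm.trans
      (Equiv.piCongrRight fun i => Fin.consEquiv fun _ => α i)
  rw [← e.sum_comp, Fintype.sum_prod_type, Finset.smul_sum]
  exact Finset.sum_congr rfl fun h _ => by simp [e, Fin.consEquiv]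

section Clonoid

variable {m : ℕ} {K : Fin m → Type*} [∀ i, Field (K i)] {F : Type*} [CommRing F]
  {C : ∀ n : ℕ, Set ((∀ i, Fin n → K i) → F)} {n : ℕ}

theorem IsLCC.zero_mem (hC : IsLCC K F C) (l : ℕ) : (fun _ => (0 : F)) ∈ C l := by
  obtain ⟨n, f, hf⟩ := hC.1
  have h0 : (fun _ => (0 : F)) ∈ C n := by simpa using hC.2.1 n 0 0 f f hf hf
  simpa using hC.2.2 n l _ h0 0

theorem IsLCC.smul_mem (hC : IsLCC K F C) (c : F) {f : (∀ i, Fin n → K i) → F} (hf : f ∈ C n) :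
    (fun x => c * f x) ∈ C n := by
  simpa using hC.2.1 n c 0 f f hf hf

theorem IsLCC.sum_mem (hC : IsLCC K F C) {ι : Type*} (s : Finset ι)
    {G : ι → (∀ i, Fin n → K i) → F} (hG : ∀ a ∈ s, G a ∈ C n) :
    (fun x => ∑ a ∈ s, G a x) ∈ C n := by
  classical
  induction s using Finset.induction_on with
  | empty => simpa using hC.zero_mem n
  | insert a s ha ih =>
    simpa [Finset.sum_insert ha] using
      hC.2.1 n 1 1 _ _ (hG a (mem_insert_self a s)) (ih fun b hb => hG b (mem_insert_of_mem hb))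

def pairing (a x : ∀ i, Fin n → K i) : ∀ i, Fin 1 → K i := fun i _ => a i ⬝ᵥ x i

theorem pairing_add_left (a b x : ∀ i, Fin n → K i) :
    pairing (a + b) x = pairing a x + pairing b x := by
  funext i _
  exact add_dotProduct _ _ _

theorem IsLCC.comp_pairing_mem (hC : IsLCC K F C) {g : (∀ i, Fin 1 → K i) → F} (hg : g ∈ C 1)
    (a : ∀ i, Fin n → K i) : (fun x => g (pairing a x)) ∈ C n :=
  hC.2.2 1 n g hg fun i => Matrix.of fun _ => a i

theorem sum_mul_comp_pairing_mem_clgU [∀ i, Fintype (K i)] {S : Set ((∀ i, Fin 1 → K i) → F)}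
    {g : (∀ i, Fin 1 → K i) → F} (hg : g ∈ S) (c : (∀ i, Fin n → K i) → F) :
    (fun x => ∑ a, c a * g (pairing a x)) ∈ ClgU K F S n := fun _ hC hS =>
  hC.sum_mem _ fun a _ => hC.smul_mem (c a) (hC.comp_pairing_mem (hS hg) a)

def firstAxis {k : ℕ} (lam : ∀ i, K i) : ∀ i, Fin k → K i :=
  fun i j => if (j : ℕ) = 0 then lam i else 0

theorem firstAxis_apply (lam : ∀ i, K i) (i : Fin m) :
    (firstAxis lam : ∀ i, Fin (n + 1) → K i) i = Pi.single 0 (lam i) := by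
  funext j
  cases j using Fin.cases <;> simp [firstAxis, Fin.succ_ne_zero]

theorem pairing_firstAxis (a : ∀ i, Fin (n + 1) → K i) (lam : ∀ i, K i) :
    pairing a (firstAxis lam) = fun i _ => a i 0 * lam i := by
  funext i _
  simp [pairing, firstAxis_apply, dotProduct_single]

theorem exists_apply_succ_ne_zero_of_ne_firstAxis {x : ∀ i, Fin (n + 1) → K i}
    (hx : ¬ ∃ lam, x = firstAxis lam) : ∃ (i₀ : Fin m) (j : Fin n), x i₀ j.succ ≠ 0 := by
  by_contra! h
  refine hx ⟨fun i => x i 0, funext fun i => funext fun j => ?_⟩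
  cases j using Fin.cases <;> simp [firstAxis, h]

end Clonoid

section Weight

variable {m : ℕ} {K : Fin m → Type*} [∀ i, Field (K i)] [∀ i, DecidableEq (K i)]
  {F : Type*} [CommRing F] {n : ℕ}

def signWeight (h : ∀ i, K i) : F :=
  ∏ i, ((if h i = 1 then 1 else 0) - if h i = 0 then 1 else 0)

variable [∀ i, Fintype (K i)]

theorem sum_signWeight_mul_apply_mul (g : (∀ i, Fin 1 → K i) → F)
    (hg : ∀ x, (∃ i, x i = 0) → g x = 0) (lam : ∀ i, K i) :
    ∑ h, signWeight h * g (fun i _ => h i * lam i) = g (fun i _ => lam i) := by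
  rw [Finset.sum_eq_single (fun _ => 1)]
  · simp [signWeight]
  · intro h _ hne
    obtain ⟨i, hi⟩ := Function.ne_iff.mp hne
    by_cases h0 : h i = 0
    · rw [hg _ ⟨i, by funext; simp [h0]⟩, mul_zero]
    · rw [signWeight, Finset.prod_eq_zero (mem_univ i) (by simp [h0, hi]), zero_mul]
  · simp

theorem sum_signWeight_mul_pairing_firstAxis (g : (∀ i, Fin 1 → K i) → F)
    (hg : ∀ x, (∃ i, x i = 0) → g x = 0) (lam : ∀ i, K i) :
    ∑ a : ∀ i, Fin (n + 1) → K i, signWeight (fun i => a i 0) * g (pairing a (firstAxis lam))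
      = Fintype.card (∀ i, Fin n → K i) • g (fun i _ => lam i) := by
  simp only [pairing_firstAxis]
  rw [Fintype.sum_comp_apply_zero n fun h => signWeight h * g (fun i _ => h i * lam i),
    sum_signWeight_mul_apply_mul g hg]

theorem sum_signWeight_mul_eq_zero_of_add_invariant (R : (∀ i, Fin (n + 1) → K i) → F)
    (v : ∀ i, Fin (n + 1) → K i) (i₀ : Fin m) (hv₀ : v i₀ 0 = 1) (hv : ∀ i ≠ i₀, v i 0 = 0)
    (hR : ∀ a, R (a + v) = R a) :
    ∑ a, signWeight (fun i => a i 0) * R a = 0 := by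
  let w : ∀ {i}, K i → F := fun s => (if s = 1 then 1 else 0) - if s = 0 then 1 else 0
  let P : (∀ i, Fin (n + 1) → K i) → F := fun a => (∏ i ∈ univ.erase i₀, w (a i 0)) * R a
  have hP : ∀ a, P (a + v) = P a := fun a => by
    refine congrArg₂ _ (prod_congr rfl fun i hi => ?_) (hR a)
    simp [hv i (ne_of_mem_erase hi)]
  -- `w s = [s = 1] - [s + 1 = 1]`, and adding `v` adds one to `a i₀ 0`
  have hsplit : ∀ a, signWeight (fun i => a i 0) * R a
      = (if a i₀ 0 = 1 then 1 else 0) * P a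
        - (if (a + v) i₀ 0 = 1 then 1 else 0) * P (a + v) := by
    intro a
    rw [hP, ← sub_mul, signWeight, ← mul_prod_erase _ _ (mem_univ i₀), mul_assoc]
    simp [hv₀, w, P]
  simp_rw [hsplit, sum_sub_distrib]
  exact sub_eq_zero.mpr (Equiv.sum_comp (Equiv.addRight v) fun a =>
    (if a i₀ 0 = 1 then (1 : F) else 0) * P a).symm

theorem sum_signWeight_mul_pairing_eq_zero (g : (∀ i, Fin 1 → K i) → F)
    {x : ∀ i, Fin (n + 1) → K i} {i₀ : Fin m} {j : Fin n} (hx : x i₀ j.succ ≠ 0) :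
    ∑ a, signWeight (fun i => a i 0) * g (pairing a x) = 0 := by
  let v : ∀ i, Fin (n + 1) → K i :=
    Pi.single i₀ (Pi.single 0 1 - (x i₀ 0 / x i₀ j.succ) • Pi.single j.succ 1)
  have hvx : pairing v x = 0 := by
    funext i _
    rcases eq_or_ne i i₀ with rfl | hi
    · simp [v, pairing, sub_dotProduct, single_dotProduct, div_mul_cancel₀ _ hx]
    · simp [v, pairing, hi]
  refine sum_signWeight_mul_eq_zero_of_add_invariant _ v i₀ ?_ (fun i hi => ?_) fun a => ?_
  · simp [v, (Fin.succ_ne_zero j).symm]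
  · simp [v, hi]
  · rw [pairing_add_left, hvx, add_zero]

end Weight

theorem tk_mem_clg_unary_general
    {m : ℕ} (K : Fin m → Type*) [∀ i, Field (K i)] [∀ i, Fintype (K i)]
    (Fp : Type*) [Field Fp] [Fintype Fp]
    (hcop : Nat.Coprime (∏ i, Fintype.card (K i)) (Fintype.card Fp))
    (C : ∀ n : ℕ, Set ((∀ i, Fin n → K i) → Fp))
    (g : (∀ i, Fin 1 → K i) → Fp) (hg : g ∈ C 1)
    (hgabs : ∀ x : ∀ i, Fin 1 → K i, (∃ i, x i = 0) → g x = 0)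
    (k : ℕ) (hk : 1 ≤ k)
    (t : (∀ i, Fin k → K i) → Fp)
    (ht1 : ∀ lam : ∀ i, K i,
      t (fun i => fun j : Fin k => if (j : ℕ) = 0 then lam i else 0)
        = g (fun i => fun _ : Fin 1 => lam i))
    (ht0 : ∀ x : ∀ i, Fin k → K i,
      (¬ ∃ lam : ∀ i, K i, x = fun i => fun j : Fin k => if (j : ℕ) = 0 then lam i else 0) →
      t x = 0) :
    (∀ x : ∀ i, Fin k → K i, (∃ i, x i = 0) → t x = 0) ∧ t ∈ ClgU K Fp (C 1) k := by
  classical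
  obtain ⟨n, rfl⟩ := Nat.exists_eq_add_of_le' hk
  set N : Fp := (Fintype.card (∀ i, Fin n → K i) : Fp)
  have hN : N ≠ 0 := FiniteField.natCast_ne_zero_of_coprime <| by
    simpa [Fintype.card_pi, Fintype.card_fun, Finset.prod_pow] using hcop.pow_left n
  have key : ∀ x, N * t x = ∑ a, signWeight (fun i => a i 0) * g (pairing a x) := by
    intro x
    by_cases hx : ∃ lam, x = firstAxis lam
    · obtain ⟨lam, rfl⟩ := hx
      rw [show t (firstAxis lam) = _ from ht1 lam, sum_signWeight_mul_pairing_firstAxis g hgabs,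
        nsmul_eq_mul]
    · obtain ⟨i₀, j, hj⟩ := exists_apply_succ_ne_zero_of_ne_firstAxis hx
      rw [ht0 x hx, mul_zero, sum_signWeight_mul_pairing_eq_zero g hj]
  refine ⟨fun x ⟨i, hi⟩ => ?_, ?_⟩
  · have hterm : ∀ a, g (pairing a x) = 0 := fun a =>
      hgabs _ ⟨i, funext fun _ => by simp [pairing, hi]⟩
    simpa [hN, hterm] using key x
  · have ht : t = fun x => ∑ a, (N⁻¹ * signWeight (fun i => a i 0)) * g (pairing a x) := by
      funext x
      simp only [mul_assoc, ← Finset.mul_sum, ← key, inv_mul_cancel_left₀ hN]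
    rw [ht]
    exact sum_mul_comp_pairing_mem_clgU hg _

/-- if `g ∈ C^[1]` is `0`-absorbing in `[m]`, then for every `k` the
function `t_k`, supported on the product of lines spanned by the first standard basis
vectors and agreeing there with `g`, is `0`-absorbing in `[m]` and lies in `Clg(C^[1])`. -/
theorem tk_mem_clg_unary
    {m : ℕ} (K : Fin m → Type*) [∀ i, Field (K i)] [∀ i, Fintype (K i)]
    (Fp : Type*) [Field Fp] [Fintype Fp]
    (hcop : Nat.Coprime (∏ i, Fintype.card (K i)) (Fintype.card Fp))
    (C : ∀ n : ℕ, Set ((∀ i, Fin n → K i) → Fp)) (hC : IsLCC K Fp C)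
    (g : (∀ i, Fin 1 → K i) → Fp) (hg : g ∈ C 1)
    (hgabs : ∀ x : ∀ i, Fin 1 → K i, (∃ i, x i = 0) → g x = 0)
    (k : ℕ) (hk : 1 ≤ k)
    (t : (∀ i, Fin k → K i) → Fp)
    (ht1 : ∀ lam : ∀ i, K i,
      t (fun i => fun j : Fin k => if (j : ℕ) = 0 then lam i else 0)
        = g (fun i => fun _ : Fin 1 => lam i))
    (ht0 : ∀ x : ∀ i, Fin k → K i,
      (¬ ∃ lam : ∀ i, K i, x = fun i => fun j : Fin k => if (j : ℕ) = 0 then lam i else 0) →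
      t x = 0) :
    (∀ x : ∀ i, Fin k → K i, (∃ i, x i = 0) → t x = 0) ∧ t ∈ ClgU K Fp (C 1) k :=
  tk_mem_clg_unary_general K Fp hcop C g hg hgabs k hk t ht1 ht0
end

section
/- Let q₁,…,qₘ, p be prime powers with ∏ᵢ qᵢ coprime to p and K = ∏ᵢ F_{qᵢ}. Let C be an (F_p, K)-linearly closed clonoid, I ⊆ [m], and f ∈ C an n-ary function that is 0-absorbing in I. Then f belongs to the (F_p, K)-linearly closed clonoid generated by the unary part C^[1]. -/
/-!
Fix a block `i₀ ∈ I` and freeze the other arguments, so that `f` becomes a function `G` on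
`K_{i₀}ⁿ` with `G 0 = 0`. Summing `G ((v ⬝ᵥ x) • u)` over representatives `v` of the points
of `ℙ(K_{i₀}ⁿ)` and over the `u` with `v ⬝ᵥ u = 1`, minus the same sum over `v ⬝ᵥ u = 0`,
gives `qⁿ⁻¹ (G x - G 0)`: this is a count of projective points on hyperplanes. Since `q` is
invertible in `F_p`, `f` is a linear combination of functions in which block `i₀` is replaced
by the rank-one map `x ↦ (v ⬝ᵥ x) • u`. Doing this for every block of `I` and then using that
`f` ignores the blocks outside `I`, `f` becomes a linear combination of functions
`x ↦ g (v₁ ⬝ᵥ x₁, …, vₘ ⬝ᵥ xₘ)` with `g ∈ C^[1]`.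
-/

open scoped LinearAlgebra.Projectivization
open Finset Matrix Module

theorem Nat.cast_ne_zero_of_coprime_card {F : Type*} [Ring F] [Fintype F] [Nontrivial F] {k : ℕ}
    (hk : k.Coprime (Fintype.card F)) : (k : F) ≠ 0 := fun h =>
  CharP.ringChar_ne_one <| Nat.eq_one_of_dvd_coprimes hk
    ((CharP.cast_eq_zero_iff F (ringChar F) k).1 h)
    ((CharP.cast_eq_zero_iff F (ringChar F) _).1 (Nat.cast_card_eq_zero F))

theorem replicateCol_mul_replicateRow_mulVec {R n : Type*} [CommSemiring R] [Fintype n]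
    (u v x : n → R) :
    (replicateCol (Fin 1) u * replicateRow (Fin 1) v) *ᵥ x = (v ⬝ᵥ x) • u := by
  rw [← mulVec_mulVec]
  ext j
  simp [mulVec, dotProduct, mul_comm]

theorem sum_sum_filter_eq_sum_card_smul {α β M : Type*} [Fintype α] [Fintype β]
    [AddCommMonoid M] (P : α → β → Prop) [∀ a b, Decidable (P a b)] (g : β → M) :
    ∑ a, ∑ b with P a b, g b = ∑ b, #{a | P a b} • g b := by
  simp_rw [sum_filter]
  rw [sum_comm]
  simp_rw [← sum_filter, sum_const]

section DotProduct

variable {K ι M : Type*} [Field K] [Fintype K] [DecidableEq K] [Fintype ι] [DecidableEq ι]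
  [AddCommGroup M]

theorem card_fiber_dotProduct_eq {v : ι → K} (hv : v ≠ 0) (a b : K) :
    #{u | v ⬝ᵥ u = a} = #{u | v ⬝ᵥ u = b} := by
  have hsurj := LinearMap.surjective ((LinearEquiv.map_ne_zero_iff (dotProductEquiv K ι)).2 hv)
  simpa using AddMonoidHom.card_fiber_eq_of_mem_range (dotProductEquiv K ι v)
    (Set.mem_range.2 (hsurj a)) (Set.mem_range.2 (hsurj b))

theorem sum_filter_dotProduct_eq_comp_smul (G : (ι → K) → M) (v : ι → K) {s : K} (hs : s ≠ 0)
    (c : K) : ∑ u with v ⬝ᵥ u = c, G (s • u) = ∑ w with v ⬝ᵥ w = s * c, G w := by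
  refine sum_nbij' (s • ·) (s⁻¹ • ·) ?_ ?_ ?_ ?_ (fun _ _ => rfl) <;>
    simp_all [dotProduct_smul, smul_smul]

theorem sum_filter_dotProduct_eq_one_comp_smul_sub (G : (ι → K) → M) {v : ι → K} (hv : v ≠ 0)
    (s : K) :
    ∑ u with v ⬝ᵥ u = 1, G (s • u) - ∑ u with v ⬝ᵥ u = 0, G (s • u)
      = ∑ w with v ⬝ᵥ w = s, G w - ∑ w with v ⬝ᵥ w = 0, G w := by
  by_cases hs : s = 0
  · simp [hs, sum_const, card_fiber_dotProduct_eq hv 1 0]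
  · rw [sum_filter_dotProduct_eq_comp_smul G v hs, sum_filter_dotProduct_eq_comp_smul G v hs,
      mul_one, mul_zero]

end DotProduct

noncomputable instance Projectivization.fintypeOfFinite {K V : Type*} [DivisionRing K]
    [AddCommGroup V] [Module K V] [Finite V] : Fintype (ℙ K V) :=
  Fintype.ofFinite _

namespace Projectivization

section Counting

variable {K V : Type*} [Field K] [Fintype K] [AddCommGroup V] [Module K V] [Fintype V]

theorem card_filter_rep_mem_mul_add_one (W : Submodule K V) [DecidablePred (· ∈ W)] :
    #{p : ℙ K V | p.rep ∈ W} * (Fintype.card K - 1) + 1 = Fintype.card W := by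
  classical
  have hrep (v : {v : V // v ≠ 0}) :
      (v : V) ∈ W ↔ ((nonZeroEquivProjectivizationProdUnits K V v).1).rep ∈ W := by
    obtain ⟨a, ha⟩ := exists_smul_eq_mk_rep K (v : V) v.2
    exact (Submodule.smul_mem_iff' W a).symm.trans (ha ▸ Iff.rfl)
  have e : {v : {v : V // v ≠ 0} // (v : V) ∈ W} ≃ {p : ℙ K V // p.rep ∈ W} × Kˣ :=
    ((nonZeroEquivProjectivizationProdUnits K V).subtypeEquiv hrep).trans
      Equiv.prodSubtypeFstEquivSubtypeProd
  have hW : Fintype.card {v : {v : V // v ≠ 0} // (v : V) ∈ W} + 1 = Fintype.card W := by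
    rw [Fintype.card_congr (Equiv.subtypeSubtypeEquivSubtypeInter _ (· ∈ W)),
      Fintype.card_subtype, Fintype.card_subtype, filter_and, filter_ne', inter_comm,
      inter_erase, inter_univ, card_erase_add_one (by simp)]
  rw [← hW, Fintype.card_congr e, Fintype.card_prod, Fintype.card_subtype, Fintype.card_units]

theorem card_filter_rep_mem_ker_add_pow {f : Dual K V} (hf : f ≠ 0)
    [DecidablePred (· ∈ LinearMap.ker f)] :
    #{p : ℙ K V | p.rep ∈ LinearMap.ker f} + Fintype.card K ^ finrank K (LinearMap.ker f)
      = Fintype.card (ℙ K V) := by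
  have hker := card_filter_rep_mem_mul_add_one (LinearMap.ker f)
  have hV := card' K V
  rw [Module.card_eq_pow_finrank (K := K) (V := LinearMap.ker f)] at hker
  rw [Nat.card_eq_fintype_card, Nat.card_eq_fintype_card, Nat.card_eq_fintype_card,
    Module.card_eq_pow_finrank (K := K) (V := V), ← f.finrank_ker_add_one_of_ne_zero hf,
    pow_succ] at hV
  obtain ⟨t, ht⟩ : ∃ t, Fintype.card K = t + 1 :=
    ⟨_, (Nat.succ_pred_eq_of_pos Fintype.card_pos).symm⟩
  have ht0 : 0 < t := by
    have := Fintype.one_lt_card (α := K)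
    omega
  rw [ht, Nat.add_sub_cancel] at hker hV
  rw [ht]
  apply Nat.eq_of_mul_eq_mul_right ht0
  zify at hker hV ⊢
  linear_combination hker + hV

end Counting

section DotProduct

variable {K ι M : Type*} [Field K] [Fintype K] [DecidableEq K] [Fintype ι] [DecidableEq ι]
  [AddCommGroup M]

theorem card_filter_rep_dotProduct_eq_zero (z : ι → K) :
    (#{p : ℙ K (ι → K) | p.rep ⬝ᵥ z = 0} : ℤ)
      = Fintype.card (ℙ K (ι → K)) - Fintype.card K ^ (Fintype.card ι - 1)
        + if z = 0 then Fintype.card K ^ (Fintype.card ι - 1) else 0 := by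
  by_cases hz : z = 0
  · simp [hz]
  classical
  set f : Dual K (ι → K) := dotProductEquiv K ι z
  have hf : f ≠ 0 := (LinearEquiv.map_ne_zero_iff _).2 hz
  have hdim : finrank K (LinearMap.ker f) = Fintype.card ι - 1 := by
    have := f.finrank_ker_add_one_of_ne_zero hf
    rw [finrank_fintype_fun_eq_card] at this
    omega
  have hker (p : ℙ K (ι → K)) : p.rep ∈ LinearMap.ker f ↔ p.rep ⬝ᵥ z = 0 := by
    simp [f, dotProduct_comm]
  have hcount := card_filter_rep_mem_ker_add_pow hf
  simp only [hdim, hker] at hcount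
  rw [if_neg hz, ← hcount]
  push_cast
  ring

theorem sum_rep_sum_filter_dotProduct_sub (G : (ι → K) → M) (x : ι → K) :
    ∑ p : ℙ K (ι → K), (∑ u with p.rep ⬝ᵥ u = 1, G ((p.rep ⬝ᵥ x) • u)
      - ∑ u with p.rep ⬝ᵥ u = 0, G ((p.rep ⬝ᵥ x) • u))
      = Fintype.card K ^ (Fintype.card ι - 1) • (G x - G 0) := by
  set Q := Fintype.card K ^ (Fintype.card ι - 1)
  -- After reindexing, `G w` is weighted by the number of points on `(w - x)ᗮ` minus on `wᗮ`.
  have hcoeff (w : ι → K) :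
      #{p : ℙ K (ι → K) | p.rep ⬝ᵥ w = p.rep ⬝ᵥ x} • G w
          - #{p : ℙ K (ι → K) | p.rep ⬝ᵥ w = 0} • G w
        = Q • ((if w = x then G w else 0) - if w = 0 then G w else 0) := by
    have hsub (p : ℙ K (ι → K)) : p.rep ⬝ᵥ w = p.rep ⬝ᵥ x ↔ p.rep ⬝ᵥ (w - x) = 0 := by
      simp [dotProduct_sub, sub_eq_zero]
    simp only [hsub, ← natCast_zsmul, card_filter_rep_dotProduct_eq_zero, sub_eq_zero]
    split_ifs <;> simp [Q, sub_smul]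
  simp_rw [sum_filter_dotProduct_eq_one_comp_smul_sub G (rep_nonzero _)]
  rw [sum_sub_distrib, sum_sum_filter_eq_sum_card_smul, sum_sum_filter_eq_sum_card_smul,
    ← sum_sub_distrib]
  simp_rw [hcoeff]
  rw [← smul_sum, sum_sub_distrib, sum_ite_eq', sum_ite_eq', if_pos (mem_univ _),
    if_pos (mem_univ _)]

end DotProduct

end Projectivization

section RankOne

variable {σ ι : Type*} [DecidableEq σ] [Fintype ι] {K : σ → Type*} [∀ i, Field (K i)]

def rankOneOn (s : Finset σ) (u v x : ∀ i, ι → K i) : ∀ i, ι → K i :=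
  fun i => if i ∈ s then (v i ⬝ᵥ x i) • u i else x i

theorem rankOneOn_apply_of_notMem {s : Finset σ} {i : σ} (hi : i ∉ s) (u v x : ∀ i, ι → K i) :
    rankOneOn s u v x i = x i :=
  if_neg hi

theorem rankOneOn_update {s : Finset σ} {i₀ : σ} (hi₀ : i₀ ∉ s) (u v x : ∀ i, ι → K i)
    (u₀ v₀ : ι → K i₀) :
    rankOneOn s u v (Function.update x i₀ ((v₀ ⬝ᵥ x i₀) • u₀))
      = rankOneOn (insert i₀ s) (Function.update u i₀ u₀) (Function.update v i₀ v₀) x := by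
  funext i
  by_cases hi : i = i₀
  · subst hi
    simp [rankOneOn, hi₀]
  · simp [rankOneOn, hi]

variable [DecidableEq ι] {R : Type*} [Field R]

theorem mem_span_comp_update_rankOne {i₀ : σ} [Fintype (K i₀)]
    (hq : (Fintype.card (K i₀) : R) ≠ 0) (g : (∀ i, ι → K i) → R)
    (hg : ∀ x, x i₀ = 0 → g x = 0) :
    g ∈ Submodule.span R
      {h | ∃ u₀ v₀ : ι → K i₀, h = fun x => g (Function.update x i₀ ((v₀ ⬝ᵥ x i₀) • u₀))} := by
  classical
  set S := {h | ∃ u₀ v₀ : ι → K i₀, h = fun x => g (Function.update x i₀ ((v₀ ⬝ᵥ x i₀) • u₀))}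
  set gen : (ι → K i₀) → (ι → K i₀) → (∀ i, ι → K i) → R :=
    fun u₀ v₀ x => g (Function.update x i₀ ((v₀ ⬝ᵥ x i₀) • u₀))
  have hsum : (Fintype.card (K i₀) ^ (Fintype.card ι - 1)) • g
      = ∑ p : ℙ (K i₀) (ι → K i₀),
          (∑ u with p.rep ⬝ᵥ u = 1, gen u p.rep - ∑ u with p.rep ⬝ᵥ u = 0, gen u p.rep) := by
    funext x
    have := Projectivization.sum_rep_sum_filter_dotProduct_sub
      (fun w => g (Function.update x i₀ w)) (x i₀)
    simp only [Function.update_eq_self, hg _ (Function.update_self i₀ 0 x), sub_zero] at this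
    simp [gen, Finset.sum_apply, this]
  have hmem : (Fintype.card (K i₀) ^ (Fintype.card ι - 1)) • g ∈ Submodule.span R S := by
    rw [hsum]
    refine Submodule.sum_mem _ fun p _ => Submodule.sub_mem _ ?_ ?_ <;>
      exact Submodule.sum_mem _ fun u _ => Submodule.subset_span ⟨u, p.rep, rfl⟩
  rwa [← Nat.cast_smul_eq_nsmul R, Submodule.smul_mem_iff _ (by exact_mod_cast pow_ne_zero _ hq)]
    at hmem

theorem mem_span_comp_rankOneOn [∀ i, Fintype (K i)] (f : (∀ i, ι → K i) → R) (s : Finset σ)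
    (hq : ∀ i ∈ s, (Fintype.card (K i) : R) ≠ 0) (habs : ∀ x, ∀ j ∈ s, x j = 0 → f x = 0) :
    f ∈ Submodule.span R {g | ∃ u v, g = f ∘ rankOneOn s u v} := by
  induction s using Finset.induction_on with
  | empty => exact Submodule.subset_span ⟨0, 0, rfl⟩
  | @insert i₀ s hi₀ ih =>
    have hsub := ih (fun i hi => hq i (mem_insert_of_mem hi))
      (fun x j hj => habs x j (mem_insert_of_mem hj))
    refine Submodule.span_le.2 ?_ hsub
    rintro _ ⟨u, v, rfl⟩
    have hvanish : ∀ x, x i₀ = 0 → (f ∘ rankOneOn s u v) x = 0 := fun x hx =>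
      habs _ i₀ (mem_insert_self _ _) (by rw [rankOneOn_apply_of_notMem hi₀, hx])
    refine Submodule.span_le.2 ?_
      (mem_span_comp_update_rankOne (hq i₀ (mem_insert_self _ _)) _ hvanish)
    rintro _ ⟨u₀, v₀, rfl⟩
    exact Submodule.subset_span ⟨Function.update u i₀ u₀, Function.update v i₀ v₀,
      funext fun x => congrArg f (rankOneOn_update hi₀ u v x u₀ v₀)⟩

end RankOne

namespace IsLCC

variable {m : ℕ} {K : Fin m → Type*} [∀ i, Field (K i)] {F : Type*} [CommRing F]
  {C : ∀ n : ℕ, Set ((∀ i, Fin n → K i) → F)}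

def submodule (hC : IsLCC K F C) (n : ℕ) : Submodule F ((∀ i, Fin n → K i) → F) where
  carrier := C n
  add_mem' {f g} hf hg := by
    convert hC.2.1 n 1 1 f g hf hg using 1
    funext x
    simp
  zero_mem' := by
    obtain ⟨l, g, hg⟩ := hC.1
    have hconst := hC.2.2 l n g hg 0
    convert hC.2.1 n 0 0 _ _ hconst hconst using 1
    funext x
    simp
  smul_mem' a f hf := by
    convert hC.2.1 n a 0 f f hf hf using 1
    funext x
    simp

theorem comp_rankOneOn_mem_clgU (hC : IsLCC K F C) {I : Finset (Fin m)} {n : ℕ}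
    {f : (∀ i, Fin n → K i) → F} (hf : f ∈ C n)
    (hdep : ∀ x, f x = f (fun i => if i ∈ I then x i else 0)) (u v : ∀ i, Fin n → K i) :
    f ∘ rankOneOn I u v ∈ ClgU K F (C 1) n := by
  intro C' hC' hunary
  have hg : (fun t : ∀ i, Fin 1 → K i =>
      f fun i => (if i ∈ I then replicateCol (Fin 1) (u i) else 0) *ᵥ t i) ∈ C 1 :=
    hC.2.2 n 1 f hf _
  convert hC'.2.2 1 n _ (hunary hg) (fun i => replicateRow (Fin 1) (v i)) using 1
  funext x
  rw [Function.comp_apply, hdep]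
  congr 1
  funext i
  by_cases hi : i ∈ I <;> simp [rankOneOn, hi, replicateCol_mul_replicateRow_mulVec]

end IsLCC

/-- every member of `C` that is `0`-absorbing in some `I ⊆ [m]` lies in
the linearly closed clonoid generated by the unary part `C^[1]`. -/
theorem absorbing_mem_clg_unary
    {m : ℕ} (K : Fin m → Type*) [∀ i, Field (K i)] [∀ i, Fintype (K i)]
    (Fp : Type*) [Field Fp] [Fintype Fp]
    (hcop : Nat.Coprime (∏ i, Fintype.card (K i)) (Fintype.card Fp))
    (C : ∀ n : ℕ, Set ((∀ i, Fin n → K i) → Fp)) (hC : IsLCC K Fp C)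
    (I : Finset (Fin m)) {n : ℕ}
    (f : (∀ i, Fin n → K i) → Fp) (hf : f ∈ C n)
    (hdep : ∀ x : ∀ i, Fin n → K i, f x = f (fun i => if i ∈ I then x i else 0))
    (habs : ∀ x : ∀ i, Fin n → K i, (∃ j ∈ I, x j = 0) → f x = 0) :
    f ∈ ClgU K Fp (C 1) n := by
  intro C' hC' hunary
  have hq (i : Fin m) : (Fintype.card (K i) : Fp) ≠ 0 :=
    Nat.cast_ne_zero_of_coprime_card
      (hcop.coprime_dvd_left (dvd_prod_of_mem (fun i => Fintype.card (K i)) (mem_univ i)))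
  have hspan := mem_span_comp_rankOneOn f I (fun i _ => hq i) fun x j hj hx => habs x ⟨j, hj, hx⟩
  refine (Submodule.span_le (p := hC'.submodule n)).2 ?_ hspan
  rintro _ ⟨u, v, rfl⟩
  exact hC.comp_rankOneOn_mem_clgU hf hdep u v C' hC' hunary
end

section
/- Let q₁,…,qₘ, p be prime powers with ∏ᵢ qᵢ coprime to p and K = ∏ᵢ F_{qᵢ}. Then every (F_p, K)-linearly closed clonoid C is generated by its unary functions: C = Clg(C^[1]). -/
open Finset Matrix
open scoped LinearAlgebra.Projectivization

theorem AddMonoidHom.sum_comp_of_surjective {V W M : Type*} [AddGroup V] [Fintype V]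
    [AddMonoid W] [Fintype W] [DecidableEq W] [AddCommMonoid M] (φ : V →+ W)
    (hφ : Function.Surjective φ) (F : W → M) :
    ∑ v, F (φ v) = #{v | φ v = 0} • ∑ w, F w := by
  rw [Finset.sum_comp, Finset.smul_sum, image_univ_of_surjective hφ]
  refine sum_congr rfl fun w _ => ?_
  rw [AddMonoidHom.card_fiber_eq_of_mem_range φ (hφ w) ⟨0, map_zero φ⟩]

theorem Matrix.mulVec_surjective_of_linearIndependent_row {m n k : Type*} [Fintype m]
    [Fintype n] [Field k] {M : Matrix m n k} (h : LinearIndependent k M.row) :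
    Function.Surjective M.mulVec := by
  classical
  have hrange : LinearMap.range M.mulVecLin = ⊤ := Submodule.eq_top_of_finrank_eq <| by
    rw [← Matrix.rank, h.rank_matrix, Module.finrank_fintype_fun_eq_card]
  exact LinearMap.range_eq_top.1 hrange

theorem Matrix.replicateCol_mulVec_replicateRow_mulVec {n k : Type*} [Fintype n] [CommSemiring k]
    (a b x : n → k) : replicateCol (Fin 1) a *ᵥ (replicateRow (Fin 1) b *ᵥ x) = (b ⬝ᵥ x) • a := by
  ext j
  simp [mulVec, dotProduct, mul_comm]

theorem natCast_ne_zero_of_coprime_card {F : Type*} [Field F] [Fintype F] {n : ℕ}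
    (h : n.Coprime (Fintype.card F)) : (n : F) ≠ 0 := fun hn =>
  CharP.ringChar_ne_one <| Nat.eq_one_of_dvd_coprimes h ((ringChar.spec F n).1 hn)
    ((ringChar.spec F _).1 (FiniteField.cast_card_eq_zero F))

noncomputable instance {k V : Type*} [DivisionRing k] [AddCommGroup V] [Module k V] [Finite V] :
    Fintype (ℙ k V) := Fintype.ofFinite _

section DotProduct

variable {k : Type*} [Field k] {N : ℕ}

def dotProductAddHom (a : Fin N → k) : (Fin N → k) →+ k :=
  AddMonoidHom.mk' (a ⬝ᵥ ·) (dotProduct_add a)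

@[simp]
theorem dotProductAddHom_apply (a b : Fin N → k) : dotProductAddHom a b = a ⬝ᵥ b := rfl

theorem dotProduct_surjective {a : Fin N → k} (ha : a ≠ 0) : Function.Surjective (a ⬝ᵥ ·) := by
  obtain ⟨j, hj⟩ := Function.ne_iff.1 ha
  intro u
  exact ⟨Pi.single j (u / a j), by simp [dotProduct_single, mul_div_cancel₀ _ hj]⟩

end DotProduct

theorem Projectivization.mem_span_rep_iff {k V : Type*} [DivisionRing k] [AddCommGroup V]
    [Module k V] {x : V} (hx : x ≠ 0) (p : ℙ k V) : x ∈ k ∙ p.rep ↔ p = mk k x hx := by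
  rw [Submodule.mem_span_singleton, eq_comm, ← p.mk_rep, mk_eq_mk_iff' k x p.rep hx p.rep_nonzero,
    p.mk_rep]

def IsReproducing {W V R : Type*} [Fintype W] [CommSemiring R] (c : W → R) (P : W → V → V) :
    Prop :=
  ∀ (f : V → R) (x : V), f x = ∑ w, c w * f (P w x)

theorem boole_pi_eq_prod_boole {ι R : Type*} [Fintype ι] [CommSemiring R] {V : ι → Type*}
    [∀ i, DecidableEq (V i)] (x y : ∀ i, V i) :
    (if x = y then (1 : R) else 0) = ∏ i, if x i = y i then (1 : R) else 0 := by
  simp [prod_boole, funext_iff]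

theorem IsReproducing.pi {ι R : Type*} [Fintype ι] [DecidableEq ι] [CommSemiring R]
    {V W : ι → Type*} [∀ i, Fintype (V i)] [∀ i, Fintype (W i)] {c : ∀ i, W i → R}
    {P : ∀ i, W i → V i → V i} (h : ∀ i, IsReproducing (c i) (P i)) :
    IsReproducing (fun w : ∀ i, W i => ∏ i, c i (w i)) (fun w x i => P i (w i) (x i)) := by
  classical
  intro f x
  have hdelta : ∀ y : ∀ i, V i, (if x = y then (1 : R) else 0)
      = ∑ w : ∀ i, W i, ∏ i, c i (w i) * (if P i (w i) (x i) = y i then 1 else 0) := fun y =>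
    calc (if x = y then (1 : R) else 0)
        = ∏ i, if x i = y i then (1 : R) else 0 := boole_pi_eq_prod_boole x y
      _ = ∏ i, ∑ w, c i w * (if P i w (x i) = y i then 1 else 0) :=
        prod_congr rfl fun i _ => h i (fun z => if z = y i then 1 else 0) (x i)
      _ = _ := Fintype.prod_sum _
  calc f x = ∑ y, (if x = y then (1 : R) else 0) * f y := by simp
    _ = ∑ w : ∀ i, W i, ∑ y,
          (∏ i, c i (w i)) * ((if (fun i => P i (w i) (x i)) = y then 1 else 0) * f y) := by
      simp_rw [hdelta, sum_mul]
      rw [sum_comm]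
      refine sum_congr rfl fun w _ => sum_congr rfl fun y _ => ?_
      rw [prod_mul_distrib, boole_pi_eq_prod_boole, mul_assoc]
    _ = ∑ w : ∀ i, W i, (∏ i, c i (w i)) * f (fun i => P i (w i) (x i)) := by
      simp_rw [← mul_sum, ite_mul, one_mul, zero_mul, sum_ite_eq, mem_univ, if_true]

section SingleSort

variable {k R : Type*} [Field k] [Fintype k] [DecidableEq k] {N : ℕ}

section CommRing

variable [CommRing R]

variable (R) in
def diracDiff : k → R := Pi.single 1 1 - Pi.single 0 1

theorem sum_diracDiff_mul (g : k → R) : ∑ u, diracDiff R u * g u = g 1 - g 0 := by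
  simp [diracDiff, sub_mul, sum_sub_distrib, Pi.single_apply]

theorem sum_diracDiff : ∑ u : k, diracDiff R u = 0 := by
  simpa using sum_diracDiff_mul (R := R) (k := k) 1

def hyperplaneCard (a : Fin N → k) : ℕ := #{b | dotProductAddHom a b = 0}

theorem sum_diracDiff_mul_comp_of_mem_span {a x : Fin N → k} (ha : a ≠ 0) (hx : x ∈ k ∙ a)
    (f : (Fin N → k) → R) :
    ∑ b, diracDiff R (a ⬝ᵥ b) * f ((b ⬝ᵥ x) • a) = hyperplaneCard a • (f x - f 0) := by
  obtain ⟨t, rfl⟩ := Submodule.mem_span_singleton.1 hx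
  have hdot : ∀ b, b ⬝ᵥ t • a = t * (a ⬝ᵥ b) := fun b => by
    rw [dotProduct_smul, dotProduct_comm, smul_eq_mul]
  simp_rw [hdot]
  refine ((dotProductAddHom a).sum_comp_of_surjective (dotProduct_surjective ha)
    fun u => diracDiff R u * f ((t * u) • a)).trans ?_
  simp [sum_diracDiff_mul, hyperplaneCard]

theorem sum_diracDiff_mul_comp_of_not_mem_span {a x : Fin N → k} (ha : a ≠ 0) (hx : x ∉ k ∙ a)
    (f : (Fin N → k) → R) :
    ∑ b, diracDiff R (a ⬝ᵥ b) * f ((b ⬝ᵥ x) • a) = 0 := by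
  have hind : LinearIndependent k (Matrix.of ![a, x]).row :=
    (LinearIndependent.pair_iff' ha).2 fun t ht => hx (Submodule.mem_span_singleton.2 ⟨t, ht⟩)
  have hsurj : Function.Surjective ((dotProductAddHom a).prod (dotProductAddHom x)) := by
    rintro ⟨u, t⟩
    obtain ⟨b, hb⟩ := Matrix.mulVec_surjective_of_linearIndependent_row hind ![u, t]
    exact ⟨b, Prod.ext (congrFun hb 0) (congrFun hb 1)⟩
  simp_rw [dotProduct_comm _ x]
  refine (AddMonoidHom.sum_comp_of_surjective _ hsurj
    fun p => diracDiff R p.1 * f (p.2 • a)).trans ?_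
  simp only [Fintype.sum_prod_type, ← mul_sum, ← sum_mul, sum_diracDiff, zero_mul, smul_zero]

end CommRing

variable [Field R]

theorem hyperplaneCard_ne_zero {a : Fin N → k} (hk : (Fintype.card k : R) ≠ 0) (ha : a ≠ 0) :
    (hyperplaneCard a : R) ≠ 0 := by
  have hR := (dotProductAddHom a).sum_comp_of_surjective (dotProduct_surjective ha)
    fun _ => (1 : R)
  simp only [sum_const, card_univ, nsmul_eq_mul, mul_one, Fintype.card_fun, Fintype.card_fin,
    Nat.cast_pow] at hR
  exact left_ne_zero_of_mul (hR ▸ pow_ne_zero N hk : (hyperplaneCard a : R) * _ ≠ 0)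

theorem eq_add_sum_rankOne (hk : (Fintype.card k : R) ≠ 0) (f : (Fin N → k) → R)
    (x : Fin N → k) :
    f x = f 0 + ∑ p : ℙ k (Fin N → k), ∑ b,
      (hyperplaneCard p.rep : R)⁻¹ * diracDiff R (p.rep ⬝ᵥ b) * f ((b ⬝ᵥ x) • p.rep) := by
  classical
  have hline : ∀ p : ℙ k (Fin N → k), ∑ b,
      (hyperplaneCard p.rep : R)⁻¹ * diracDiff R (p.rep ⬝ᵥ b) * f ((b ⬝ᵥ x) • p.rep)
        = if x ∈ k ∙ p.rep then f x - f 0 else 0 := by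
    intro p
    simp_rw [mul_assoc, ← mul_sum]
    split_ifs with hx
    · rw [sum_diracDiff_mul_comp_of_mem_span p.rep_nonzero hx, nsmul_eq_mul,
        inv_mul_cancel_left₀ (hyperplaneCard_ne_zero hk p.rep_nonzero)]
    · rw [sum_diracDiff_mul_comp_of_not_mem_span p.rep_nonzero hx, mul_zero]
  rw [sum_congr rfl fun p _ => hline p]
  by_cases hx : x = 0
  · simp [hx]
  · simp_rw [Projectivization.mem_span_rep_iff hx, sum_ite_eq', mem_univ, if_true,
      add_sub_cancel]

end SingleSort

section RankOne

variable (k R : Type*) [Field k] [Fintype k] [DecidableEq k] [Field R] (N : ℕ)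

noncomputable def rankOneCoeff : Option (ℙ k (Fin N → k) × (Fin N → k)) → R
  | none => 1
  | some (p, b) => (hyperplaneCard p.rep : R)⁻¹ * diracDiff R (p.rep ⬝ᵥ b)

noncomputable def rankOneFactors :
    Option (ℙ k (Fin N → k) × (Fin N → k)) → (Fin N → k) × (Fin N → k)
  | none => (0, 0)
  | some (p, b) => (p.rep, b)

variable {k R N}

theorem isReproducing_rankOne (hk : (Fintype.card k : R) ≠ 0) :
    IsReproducing (rankOneCoeff k R N)
      fun w x => ((rankOneFactors k N w).2 ⬝ᵥ x) • (rankOneFactors k N w).1 := by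
  intro f x
  rw [Fintype.sum_option, Fintype.sum_prod_type]
  simpa [rankOneCoeff, rankOneFactors] using eq_add_sum_rankOne hk f x

end RankOne

namespace IsLCC

variable {m : ℕ} {K : Fin m → Type*} [∀ i, Field (K i)] {F : Type*} [CommRing F]
  {C C' : ∀ n : ℕ, Set ((∀ i, Fin n → K i) → F)}

theorem zero_mem_s9 (hC : IsLCC K F C) (n : ℕ) : (fun _ => 0) ∈ C n := by
  obtain ⟨n₀, f₀, hf₀⟩ := hC.1
  simpa using hC.2.2 n₀ n _ (hC.2.1 n₀ 0 0 f₀ f₀ hf₀ hf₀) fun _ => 0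

theorem sum_mem_s9 (hC : IsLCC K F C) {n : ℕ} {ι : Type*} (s : Finset ι) (c : ι → F)
    (g : ι → (∀ i, Fin n → K i) → F) (hg : ∀ j ∈ s, g j ∈ C n) :
    (fun x => ∑ j ∈ s, c j * g j x) ∈ C n := by
  classical
  induction s using Finset.induction_on with
  | empty => simpa using hC.zero_mem_s9 n
  | insert a s ha ih =>
    simpa [sum_insert ha] using hC.2.1 n (c a) 1 (g a) _ (hg a (mem_insert_self a s))
      (ih fun j hj => hg j (mem_insert_of_mem hj))

theorem comp_rankOne_mem (hC : IsLCC K F C) (hC' : IsLCC K F C') (hCC' : C 1 ⊆ C' 1) {n : ℕ}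
    {f : (∀ i, Fin n → K i) → F} (hf : f ∈ C n) (a b : ∀ i, Fin n → K i) :
    (fun x => f fun i => (b i ⬝ᵥ x i) • a i) ∈ C' n := by
  simpa only [replicateCol_mulVec_replicateRow_mulVec] using
    hC'.2.2 1 n _ (hCC' (hC.2.2 n 1 f hf fun i => replicateCol (Fin 1) (a i)))
      fun i => replicateRow (Fin 1) (b i)

end IsLCC

/-- if `∏ᵢ qᵢ` is coprime to `p`, every `(F_p, K)`-linearly closed
clonoid is generated by its unary part. -/
theorem lcc_generated_by_unary_part
    {m : ℕ} (K : Fin m → Type*) [∀ i, Field (K i)] [∀ i, Fintype (K i)]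
    (Fp : Type*) [Field Fp] [Fintype Fp]
    (hcop : Nat.Coprime (∏ i, Fintype.card (K i)) (Fintype.card Fp))
    (C : ∀ n : ℕ, Set ((∀ i, Fin n → K i) → Fp)) (hC : IsLCC K Fp C) :
    ∀ n, C n = ClgU K Fp (C 1) n := by
  classical
  have hK : ∀ i, (Fintype.card (K i) : Fp) ≠ 0 := fun i =>
    natCast_ne_zero_of_coprime_card (Nat.coprime_prod_left_iff.1 hcop i (mem_univ i))
  intro n
  refine Set.Subset.antisymm (fun f hf C' hC' hCC' => ?_) fun f hf => hf C hC subset_rfl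
  rw [funext (IsReproducing.pi (fun i => isReproducing_rankOne (N := n) (hK i)) f)]
  exact hC'.sum_mem_s9 univ _ _ fun w _ => hC.comp_rankOne_mem hC' hCC' hf _ _
end

section
/- Let F = ∏_{i=1}^s F_{pᵢ} and K = ∏_{j=1}^m F_{qⱼ} be products of finite fields. Then the lattice of all (F, K)-linearly closed clonoids is isomorphic to the direct product of the lattices of all (F_{pᵢ}, K)-linearly closed clonoids, 1 ≤ i ≤ s, via C ↦ (ρ₁(C),…,ρ_s(C)) where ρᵢ(C) = {πᵢ ∘ g : g ∈ C} and πᵢ is the i-th coordinate projection of F. -/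
/-!
The coordinate idempotents `eᵢ = Pi.single i 1` of `∏ᵢ Fpᵢ` make a linearly closed clonoid `C`
over the product determined by its projections: if for each `i` some `hᵢ ∈ C` agrees with `g`
in coordinate `i`, then `g = ∑ᵢ eᵢ hᵢ ∈ C`. So `C` is the set of functions all of whose
coordinates lie in the `ρᵢ(C)`, which gives injectivity and order reflection; conversely, a
family of clonoids `Dᵢ` is the family of projections of `{g | ∀ i, πᵢ ∘ g ∈ Dᵢ}`.
-/

section LinearCombinations

variable {m : ℕ} {K : Fin m → Type*} [∀ i, Field (K i)] {F : Type*} [CommRing F]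
  {C : ∀ n : ℕ, Set ((∀ i, Fin n → K i) → F)}

lemma IsLCC.nonempty (hC : IsLCC K F C) (n : ℕ) : (C n).Nonempty := by
  obtain ⟨l, f, hf⟩ := hC.1
  exact ⟨_, hC.2.2 l n f hf fun _ => 0⟩

lemma IsLCC.const_mul_mem (hC : IsLCC K F C) {n : ℕ} (a : F) {f} (hf : f ∈ C n) :
    (fun x => a * f x) ∈ C n := by
  simpa using hC.2.1 n a 0 f f hf hf

lemma IsLCC.sum_mul_mem (hC : IsLCC K F C) {n : ℕ} {ι : Type*} (t : Finset ι)
    (a : ι → F) (f : ι → (∀ i, Fin n → K i) → F) (hf : ∀ i ∈ t, f i ∈ C n) :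
    (fun x => ∑ i ∈ t, a i * f i x) ∈ C n := by
  classical
  induction t using Finset.induction with
  | empty => simpa using hC.const_mul_mem 0 (hC.nonempty n).some_mem
  | insert j t hj ih =>
    simpa [Finset.sum_insert hj] using
      hC.2.1 n (a j) 1 _ _ (hf j (t.mem_insert_self j))
        (ih fun i hi => hf i (Finset.mem_insert_of_mem hi))

end LinearCombinations

section Product

variable {m : ℕ} {K : Fin m → Type*} {ι : Type*} {Fp : ι → Type*}

/-- The clonoid `ρᵢ(C) = {πᵢ ∘ g : g ∈ C}`. -/
def clonoidProj (C : ∀ n : ℕ, Set ((∀ i, Fin n → K i) → ∀ i, Fp i)) (i : ι) :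
    ∀ n : ℕ, Set ((∀ i, Fin n → K i) → Fp i) :=
  fun n => {f | ∃ g ∈ C n, f = fun x => g x i}

def clonoidPi (D : ∀ i, ∀ n : ℕ, Set ((∀ i, Fin n → K i) → Fp i)) :
    ∀ n : ℕ, Set ((∀ i, Fin n → K i) → ∀ i, Fp i) :=
  fun n => {g | ∀ i, (fun x => g x i) ∈ D i n}

variable [∀ i, Field (K i)] [∀ i, CommRing (Fp i)]

lemma isLCC_clonoidProj [DecidableEq ι] {C : ∀ n : ℕ, Set ((∀ i, Fin n → K i) → ∀ i, Fp i)}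
    (hC : IsLCC K (∀ i, Fp i) C) (i : ι) : IsLCC K (Fp i) (clonoidProj C i) := by
  refine ⟨⟨0, ?_⟩, ?_, ?_⟩
  · obtain ⟨g, hg⟩ := hC.nonempty 0
    exact ⟨_, g, hg, rfl⟩
  · rintro n a b _ _ ⟨f, hf, rfl⟩ ⟨g, hg, rfl⟩
    refine ⟨_, hC.2.1 n (Pi.single i a) (Pi.single i b) f g hf hg, ?_⟩
    simp
  · rintro n l _ ⟨g, hg, rfl⟩ A
    exact ⟨_, hC.2.2 n l g hg A, rfl⟩

lemma IsLCC.mem_of_forall_mem_clonoidProj [Fintype ι] [DecidableEq ι]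
    {C : ∀ n : ℕ, Set ((∀ i, Fin n → K i) → ∀ i, Fp i)} (hC : IsLCC K (∀ i, Fp i) C)
    {n : ℕ} {g : (∀ i, Fin n → K i) → ∀ i, Fp i}
    (hg : ∀ i, (fun x => g x i) ∈ clonoidProj C i n) : g ∈ C n := by
  choose h hh hgh using hg
  have hsum : g = fun x => ∑ i, Pi.single i (1 : Fp i) * h i x := by
    funext x
    simp_rw [← Pi.single_mul_left, one_mul, ← fun i => congrFun (hgh i) x]
    exact (Finset.univ_sum_single (g x)).symm
  rw [hsum]
  exact hC.sum_mul_mem Finset.univ _ _ fun i _ => hh i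

lemma clonoidProj_subset_iff [Fintype ι] [DecidableEq ι]
    {C D : ∀ n : ℕ, Set ((∀ i, Fin n → K i) → ∀ i, Fp i)} (hD : IsLCC K (∀ i, Fp i) D) :
    (∀ n, C n ⊆ D n) ↔ ∀ i n, clonoidProj C i n ⊆ clonoidProj D i n := by
  constructor
  · rintro h i n _ ⟨g, hg, rfl⟩
    exact ⟨g, h n hg, rfl⟩
  · intro h n g hg
    exact hD.mem_of_forall_mem_clonoidProj fun i => h i n ⟨g, hg, rfl⟩

lemma clonoidProj_injective [Fintype ι] [DecidableEq ι]
    {C D : ∀ n : ℕ, Set ((∀ i, Fin n → K i) → ∀ i, Fp i)}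
    (hC : IsLCC K (∀ i, Fp i) C) (hD : IsLCC K (∀ i, Fp i) D)
    (h : ∀ i, clonoidProj C i = clonoidProj D i) : C = D := by
  funext n
  refine Set.Subset.antisymm ?_ ?_
  · exact (clonoidProj_subset_iff hD).2 (fun i n => (h i ▸ le_rfl)) n
  · exact (clonoidProj_subset_iff hC).2 (fun i n => (h i ▸ le_rfl)) n

lemma isLCC_clonoidPi {D : ∀ i, ∀ n : ℕ, Set ((∀ i, Fin n → K i) → Fp i)}
    (hD : ∀ i, IsLCC K (Fp i) (D i)) : IsLCC K (∀ i, Fp i) (clonoidPi D) := by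
  refine ⟨⟨0, fun x i => (hD i).nonempty 0 |>.some x, fun i => (hD i).nonempty 0 |>.some_mem⟩,
    ?_, ?_⟩
  · intro n a b f g hf hg i
    simpa using (hD i).2.1 n (a i) (b i) _ _ (hf i) (hg i)
  · intro n l f hf A i
    exact (hD i).2.2 n l _ (hf i) A

/-- Extend a member of `D i` by arbitrary members of the nonempty `D j` in the other
coordinates. -/
lemma clonoidProj_clonoidPi [DecidableEq ι] {D : ∀ i, ∀ n : ℕ, Set ((∀ i, Fin n → K i) → Fp i)}
    (hD : ∀ i, IsLCC K (Fp i) (D i)) (i : ι) : clonoidProj (clonoidPi D) i = D i := by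
  funext n
  ext f
  constructor
  · rintro ⟨g, hg, rfl⟩
    exact hg i
  · intro hf
    refine ⟨fun x => Function.update (fun j => ((hD j).nonempty n).some x) i (f x),
      fun j => ?_, by simp⟩
    rcases eq_or_ne j i with rfl | hji
    · simpa using hf
    · simpa [Function.update_of_ne hji] using ((hD j).nonempty n).some_mem

end Product

theorem lcc_lattice_iso_prod_general
    {m s : ℕ} (K : Fin m → Type*) [∀ i, Field (K i)]
    (Fp : Fin s → Type*) [∀ i, Field (Fp i)] :
    letI rho : (∀ n : ℕ, Set ((∀ i, Fin n → K i) → (∀ i, Fp i))) → ∀ i : Fin s,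
        ∀ n : ℕ, Set ((∀ i, Fin n → K i) → Fp i) :=
      fun C i n => {f | ∃ g ∈ C n, f = fun x => g x i}
    (∀ C, IsLCC K (∀ i, Fp i) C → ∀ i, IsLCC K (Fp i) (rho C i)) ∧
    (∀ C D, IsLCC K (∀ i, Fp i) C → IsLCC K (∀ i, Fp i) D →
      (∀ i, rho C i = rho D i) → C = D) ∧
    (∀ D : ∀ i : Fin s, ∀ n : ℕ, Set ((∀ i, Fin n → K i) → Fp i),
      (∀ i, IsLCC K (Fp i) (D i)) →
      ∃ C, IsLCC K (∀ i, Fp i) C ∧ ∀ i, rho C i = D i) ∧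
    (∀ C D, IsLCC K (∀ i, Fp i) C → IsLCC K (∀ i, Fp i) D →
      ((∀ n, C n ⊆ D n) ↔ ∀ i n, rho C i n ⊆ rho D i n)) :=
  ⟨fun _ hC => isLCC_clonoidProj hC,
    fun _ _ hC hD => clonoidProj_injective hC hD,
    fun _ hD => ⟨clonoidPi _, isLCC_clonoidPi hD, clonoidProj_clonoidPi hD⟩,
    fun _ _ _ hD => clonoidProj_subset_iff hD⟩

/-- the lattice of `(F, K)`-linearly closed clonoids, for
`F = ∏ᵢ F_{pᵢ}`, is isomorphic to the direct product of the lattices of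
`(F_{pᵢ}, K)`-linearly closed clonoids, via `C ↦ (ρ₁(C),…,ρ_s(C))` with
`ρᵢ(C) = {πᵢ ∘ g : g ∈ C}`:  `ρ` is well defined, bijective between the sets of
clonoids, and an order isomorphism. -/
theorem lcc_lattice_iso_prod
    {m s : ℕ} (K : Fin m → Type*) [∀ i, Field (K i)] [∀ i, Fintype (K i)]
    (Fp : Fin s → Type*) [∀ i, Field (Fp i)] [∀ i, Fintype (Fp i)] :
    letI rho : (∀ n : ℕ, Set ((∀ i, Fin n → K i) → (∀ i, Fp i))) → ∀ i : Fin s,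
        ∀ n : ℕ, Set ((∀ i, Fin n → K i) → Fp i) :=
      fun C i n => {f | ∃ g ∈ C n, f = fun x => g x i}
    (∀ C, IsLCC K (∀ i, Fp i) C → ∀ i, IsLCC K (Fp i) (rho C i)) ∧
    (∀ C D, IsLCC K (∀ i, Fp i) C → IsLCC K (∀ i, Fp i) D →
      (∀ i, rho C i = rho D i) → C = D) ∧
    (∀ D : ∀ i : Fin s, ∀ n : ℕ, Set ((∀ i, Fin n → K i) → Fp i),
      (∀ i, IsLCC K (Fp i) (D i)) →
      ∃ C, IsLCC K (∀ i, Fp i) C ∧ ∀ i, rho C i = D i) ∧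
    (∀ C D, IsLCC K (∀ i, Fp i) C → IsLCC K (∀ i, Fp i) D →
      ((∀ n, C n ⊆ D n) ↔ ∀ i n, rho C i n ⊆ rho D i n)) :=
  lcc_lattice_iso_prod_general K Fp
end

section
/- Let K be a finite product of finite fields, p a prime power, and K^× the multiplicative monoid of K. A subset V ⊆ F_p^K is the unary part of an (F_p, K)-linearly closed clonoid if and only if V is an F_p[K^×]-submodule of F_p^K, i.e., V is an F_p-subspace of F_p^K closed under the operations f ↦ ((x₁,…,xₘ) ↦ f(a₁x₁,…,aₘxₘ)) for all (a₁,…,aₘ) ∈ K. -/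
theorem Matrix.eq_smul_one_of_fin_one {R : Type*} [Semiring R] (B : Matrix (Fin 1) (Fin 1) R) :
    B = B 0 0 • 1 := by
  ext i j
  fin_cases i; fin_cases j
  simp

def Submodule.ofLinearCombinations {R M : Type*} [Semiring R] [AddCommMonoid M] [Module R M]
    (V : Set M) (hne : V.Nonempty)
    (hlin : ∀ (a b : R) (f g : M), f ∈ V → g ∈ V → a • f + b • g ∈ V) : Submodule R M where
  carrier := V
  zero_mem' := by
    obtain ⟨g, hg⟩ := hne
    simpa using hlin 0 0 g g hg hg
  add_mem' {f g} hf hg := by simpa using hlin 1 1 f g hf hg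
  smul_mem' a f hf := by simpa using hlin a 0 f f hf hf

section Precomposition

variable {m : ℕ} {K : Fin m → Type*} [∀ i, Semiring (K i)] {F : Type*}

def precomp {n l : ℕ} (A : ∀ i, Matrix (Fin n) (Fin l) (K i)) (f : (∀ i, Fin n → K i) → F) :
    (∀ i, Fin l → K i) → F :=
  fun x => f (fun i => (A i).mulVec (x i))

theorem precomp_precomp {k n l : ℕ} (B : ∀ i, Matrix (Fin k) (Fin n) (K i))
    (A : ∀ i, Matrix (Fin n) (Fin l) (K i)) (f : (∀ i, Fin k → K i) → F) :
    precomp A (precomp B f) = precomp (fun i => B i * A i) f := by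
  funext x
  simp only [precomp, Matrix.mulVec_mulVec]

theorem precomp_one {n : ℕ} (f : (∀ i, Fin n → K i) → F) : precomp (fun _ => 1) f = f := by
  funext x
  simp only [precomp, Matrix.one_mulVec]

theorem precomp_smul_one {n : ℕ} (c : ∀ i, K i) (f : (∀ i, Fin n → K i) → F) :
    precomp (fun i => c i • 1) f = fun x => f (fun i j => c i * x i j) := by
  funext x
  simp only [precomp, Matrix.smul_mulVec, Matrix.one_mulVec]
  rfl

end Precomposition

section Clonoid

variable {m : ℕ} {K : Fin m → Type*} [∀ i, Field (K i)] {F : Type*} [CommRing F]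

theorem IsLCC.precomp_mem {C : ∀ n : ℕ, Set ((∀ i, Fin n → K i) → F)} (hC : IsLCC K F C)
    {n l : ℕ} {f : (∀ i, Fin n → K i) → F} (hf : f ∈ C n) (A : ∀ i, Matrix (Fin n) (Fin l) (K i)) :
    precomp A f ∈ C l :=
  hC.2.2 n l f hf A

theorem IsLCC.nonempty_one {C : ∀ n : ℕ, Set ((∀ i, Fin n → K i) → F)} (hC : IsLCC K F C) :
    (C 1).Nonempty := by
  obtain ⟨n, f, hf⟩ := hC.1
  exact ⟨_, hC.precomp_mem hf (fun _ => 0)⟩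

theorem IsLCC.scaleArgs_mem {C : ∀ n : ℕ, Set ((∀ i, Fin n → K i) → F)} (hC : IsLCC K F C)
    {n : ℕ} {f : (∀ i, Fin n → K i) → F} (hf : f ∈ C n) (c : ∀ i, K i) :
    (fun x : ∀ i, Fin n → K i => f (fun i j => c i * x i j)) ∈ C n := by
  rw [← precomp_smul_one]
  exact hC.precomp_mem hf _

def unaryPrecomps (V : Set ((∀ i, Fin 1 → K i) → F)) (n : ℕ) : Set ((∀ i, Fin n → K i) → F) :=
  {h | ∃ g ∈ V, ∃ A : ∀ i, Matrix (Fin 1) (Fin n) (K i), precomp A g = h}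

/-- The `n`-ary part of the clonoid generated by `V`. -/
def spanPrecomps (V : Set ((∀ i, Fin 1 → K i) → F)) (n : ℕ) :
    Submodule F ((∀ i, Fin n → K i) → F) :=
  Submodule.span F (unaryPrecomps V n)

theorem precomp_mem_spanPrecomps {V : Set ((∀ i, Fin 1 → K i) → F)} {n l : ℕ}
    {f : (∀ i, Fin n → K i) → F} (hf : f ∈ spanPrecomps V n)
    (A : ∀ i, Matrix (Fin n) (Fin l) (K i)) :
    precomp A f ∈ spanPrecomps V l := by
  have hmap : (spanPrecomps V n).map (LinearMap.funLeft F F fun x i => (A i).mulVec (x i))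
      ≤ spanPrecomps V l := by
    rw [spanPrecomps, Submodule.map_span, Submodule.span_le]
    rintro _ ⟨_, ⟨g, hg, B, rfl⟩, rfl⟩
    exact Submodule.subset_span ⟨g, hg, fun i => B i * A i, (precomp_precomp B A g).symm⟩
  exact hmap ⟨f, hf, rfl⟩

theorem isLCC_spanPrecomps {V : Set ((∀ i, Fin 1 → K i) → F)} (hV : V.Nonempty) :
    IsLCC K F (fun n => spanPrecomps V n) := by
  refine ⟨⟨1, ?_⟩, fun n a b f g hf hg => ?_, fun n l f hf A => precomp_mem_spanPrecomps hf A⟩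
  · obtain ⟨g, hg⟩ := hV
    exact ⟨g, Submodule.subset_span ⟨g, hg, fun _ => 1, precomp_one g⟩⟩
  · exact add_mem (Submodule.smul_mem _ a hf) (Submodule.smul_mem _ b hg)

/-- In arity one every precomposition is a scaling of the arguments. -/
theorem spanPrecomps_one (W : Submodule F ((∀ i, Fin 1 → K i) → F))
    (hW : ∀ f ∈ W, ∀ c : ∀ i, K i,
      (fun x : ∀ i, Fin 1 → K i => f (fun i j => c i * x i j)) ∈ W) :
    spanPrecomps (W : Set ((∀ i, Fin 1 → K i) → F)) 1 = W := by
  refine le_antisymm (Submodule.span_le.mpr ?_) fun g hg => ?_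
  · rintro _ ⟨g, hg, B, rfl⟩
    have hB : B = fun i => B i 0 0 • 1 := funext fun i => (B i).eq_smul_one_of_fin_one
    rw [hB, precomp_smul_one]
    exact hW g hg _
  · exact Submodule.subset_span ⟨g, hg, fun _ => 1, precomp_one g⟩

end Clonoid

theorem unary_part_iff_submodule_general
    {m : ℕ} (K : Fin m → Type*) [∀ i, Field (K i)]
    (Fp : Type*) [Field Fp]
    (V : Set ((∀ i, Fin 1 → K i) → Fp)) :
    (∃ C : ∀ n : ℕ, Set ((∀ i, Fin n → K i) → Fp), IsLCC K Fp C ∧ C 1 = V) ↔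
    (V.Nonempty ∧
      (∀ (a b : Fp) (f g : (∀ i, Fin 1 → K i) → Fp), f ∈ V → g ∈ V →
        (fun x => a * f x + b * g x) ∈ V) ∧
      (∀ f ∈ V, ∀ c : ∀ i, K i,
        (fun x : ∀ i, Fin 1 → K i => f (fun i j => c i * x i j)) ∈ V)) := by
  constructor
  · rintro ⟨C, hC, rfl⟩
    exact ⟨IsLCC.nonempty_one hC, hC.2.1 1, fun f hf c => IsLCC.scaleArgs_mem hC hf c⟩
  · rintro ⟨hne, hlin, hscale⟩
    let W := Submodule.ofLinearCombinations V hne hlin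
    exact ⟨fun n => spanPrecomps V n, isLCC_spanPrecomps hne,
      congrArg SetLike.coe (spanPrecomps_one W hscale)⟩

/-- `V ⊆ F_p^K` is the unary part of an `(F_p, K)`-linearly closed
clonoid iff it is an `F_p[K^×]`-submodule of `F_p^K`, i.e. a nonempty subset closed
under `F_p`-linear combinations and under scaling of the arguments by elements of
the multiplicative monoid `K^× = ∏ᵢ F_{qᵢ}`. -/
theorem unary_part_iff_submodule
    {m : ℕ} (K : Fin m → Type*) [∀ i, Field (K i)] [∀ i, Fintype (K i)]
    (Fp : Type*) [Field Fp] [Fintype Fp]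
    (V : Set ((∀ i, Fin 1 → K i) → Fp)) :
    (∃ C : ∀ n : ℕ, Set ((∀ i, Fin n → K i) → Fp), IsLCC K Fp C ∧ C 1 = V) ↔
    (V.Nonempty ∧
      (∀ (a b : Fp) (f g : (∀ i, Fin 1 → K i) → Fp), f ∈ V → g ∈ V →
        (fun x => a * f x + b * g x) ∈ V) ∧
      (∀ f ∈ V, ∀ c : ∀ i, K i,
        (fun x : ∀ i, Fin 1 → K i => f (fun i j => c i * x i j)) ∈ V)) :=
  unary_part_iff_submodule_general K Fp V
end

section
/- Let q₁,…,qₘ and p be prime powers, K = ∏ᵢ F_{qᵢ}, h ≤ m, K₁ = ∏_{i=1}^h F_{qᵢ}. Let C be an (F_p, K)-linearly closed clonoid and C|_{K₁} = {g : ∃g' ∈ C with g'|_{K₁} = g}, where g'|_{K₁}(x₁,…,x_h) := g'(x₁,…,x_h,0,…,0). If f : ∏_{i=1}^m F_{qᵢ}^s → F_p depends exactly on the argument blocks indexed by [h], then f ∈ Clg(C^[1])^[s] if and only if f|_{K₁} ∈ Clg(C|_{K₁}^[1])^[s]. -/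
/-!
Setting the last `m - h` blocks to zero (`restrictBlocks`) and extending a function on `K₁` to
one on `K` that ignores those blocks (`extendBlocks`) both commute with precomposition by block
matrices, so each pulls linearly closed clonoids back to linearly closed clonoids. Pulling back
along `restrictBlocks` shows that restriction maps `Clg(C^[1])` into `Clg(C|_{K₁}^[1])`; pulling
back along `extendBlocks` shows that extension maps `Clg(C|_{K₁}^[1])` into `Clg(C^[1])`, because
the extension of a restriction `g|_{K₁}` is `g` precomposed with the block projection
`diag(1, …, 1, 0, …, 0)`. A function that ignores the last `m - h` blocks is the extension of its
own restriction.
-/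
open Function

lemma dependsOn_of_forall_notMem {ι : Type*} [Finite ι] {α : ι → Type*} {β : Type*}
    {f : (∀ i, α i) → β} {s : Set ι} (hf : ∀ i ∉ s, DependsOn f {i}ᶜ) : DependsOn f s := by
  classical
  have key : ∀ t : Finset ι, (t : Set ι) ⊆ sᶜ → DependsOn f (t : Set ι)ᶜ := by
    intro t
    induction t using Finset.induction_on with
    | empty => simpa using dependsOn_univ f
    | insert a t _ ih =>
      intro hts x y hxy
      have hts' : (t : Set ι) ⊆ sᶜ := fun i hi => hts (Finset.mem_insert_of_mem hi)
      calc f x = f (update x a (y a)) := hf a (hts (Finset.mem_insert_self a t)) fun i hi => by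
              rw [update_of_ne hi]
        _ = f y := ih hts' fun i hi => by
              by_cases hia : i = a
              · subst hia; simp
              · rw [update_of_ne hia]
                exact hxy i (by simp_all)
  have hfin : sᶜ.Finite := Set.toFinite _
  simpa using key hfin.toFinset (by simp)

namespace IsLCC

variable {m : ℕ} {K : Fin m → Type*} [∀ i, Field (K i)] {F : Type*} [CommRing F]
  {D : ∀ n : ℕ, Set ((∀ i, Fin n → K i) → F)}

lemma linComb_mem (hD : IsLCC K F D) {n : ℕ} (a b : F) {f g : (∀ i, Fin n → K i) → F}
    (hf : f ∈ D n) (hg : g ∈ D n) : (fun x => a * f x + b * g x) ∈ D n :=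
  hD.2.1 n a b f g hf hg

lemma comp_mulVec_mem (hD : IsLCC K F D) {n l : ℕ} {f : (∀ i, Fin n → K i) → F} (hf : f ∈ D n)
    (A : ∀ i, Matrix (Fin n) (Fin l) (K i)) :
    (fun x : ∀ i, Fin l → K i => f (fun i => (A i).mulVec (x i))) ∈ D l :=
  hD.2.2 n l f hf A

lemma const_mem (hD : IsLCC K F D) {n : ℕ} {f : (∀ i, Fin n → K i) → F} (hf : f ∈ D n)
    (l : ℕ) : (fun _ : ∀ i, Fin l → K i => f 0) ∈ D l := by
  have h0 := hD.comp_mulVec_mem hf (l := l) 0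
  simp only [Pi.zero_apply, Matrix.zero_mulVec] at h0
  exact h0

end IsLCC

section Blocks

variable {m h : ℕ} (hm : h ≤ m)

section Pad

variable {β : Fin m → Type*} [∀ i, Zero (β i)]

def padZero (y : ∀ i : Fin h, β (Fin.castLE hm i)) : ∀ i, β i :=
  fun i => if hi : (i : ℕ) < h then y ⟨i, hi⟩ else 0

lemma padZero_of_lt (y : ∀ i : Fin h, β (Fin.castLE hm i)) {i : Fin m} (hi : (i : ℕ) < h) :
    padZero hm y i = y ⟨i, hi⟩ :=
  dif_pos hi

lemma padZero_of_le (y : ∀ i : Fin h, β (Fin.castLE hm i)) {i : Fin m} (hi : h ≤ (i : ℕ)) :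
    padZero hm y i = 0 :=
  dif_neg (Nat.not_lt.2 hi)

@[simp]
lemma padZero_castLE (y : ∀ i : Fin h, β (Fin.castLE hm i)) (i : Fin h) :
    padZero hm y (Fin.castLE hm i) = y i :=
  padZero_of_lt hm y i.isLt

end Pad

variable {K : Fin m → Type*} {F : Type*}

def extendBlocks (n : ℕ) (g : (∀ i : Fin h, Fin n → K (Fin.castLE hm i)) → F) :
    (∀ i, Fin n → K i) → F :=
  fun x => g (fun i => x (Fin.castLE hm i))

variable [∀ i, Field (K i)]

def restrictBlocks (n : ℕ) (g : (∀ i, Fin n → K i) → F) :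
    (∀ i : Fin h, Fin n → K (Fin.castLE hm i)) → F :=
  fun y => g (padZero hm y)

lemma restrictBlocks_extendBlocks {n : ℕ} (g : (∀ i : Fin h, Fin n → K (Fin.castLE hm i)) → F) :
    restrictBlocks hm n (extendBlocks hm n g) = g := by
  funext y
  simp [restrictBlocks, extendBlocks]

lemma restrictBlocks_comp_mulVec {n l : ℕ} (g : (∀ i, Fin n → K i) → F)
    (A : ∀ i, Matrix (Fin n) (Fin l) (K i)) :
    restrictBlocks hm l (fun x => g (fun i => (A i).mulVec (x i))) =
      fun y => restrictBlocks hm n g (fun i => (A (Fin.castLE hm i)).mulVec (y i)) := by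
  funext y
  refine congrArg g (funext fun i => ?_)
  by_cases hi : (i : ℕ) < h
  · simp only [padZero_of_lt hm _ hi]
    rfl
  · simp [padZero_of_le hm _ (Nat.le_of_not_lt hi)]

lemma extendBlocks_comp_mulVec {n l : ℕ} (g : (∀ i : Fin h, Fin n → K (Fin.castLE hm i)) → F)
    (A : ∀ i : Fin h, Matrix (Fin n) (Fin l) (K (Fin.castLE hm i))) :
    extendBlocks hm l (fun y => g (fun i => (A i).mulVec (y i))) =
      fun x => extendBlocks hm n g
        (fun i => (padZero hm (β := fun i => Matrix (Fin n) (Fin l) (K i)) A i).mulVec (x i)) := by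
  funext x
  simp [extendBlocks]

lemma extendBlocks_restrictBlocks {n : ℕ} (g : (∀ i, Fin n → K i) → F) :
    extendBlocks hm n (restrictBlocks hm n g) =
      fun x => g (fun i => (padZero hm (β := fun i => Matrix (Fin n) (Fin n) (K i))
        (fun _ => 1) i).mulVec (x i)) := by
  funext x
  refine congrArg g (funext fun i => ?_)
  by_cases hi : (i : ℕ) < h
  · simp only [padZero_of_lt hm _ hi, Matrix.one_mulVec]
    rfl
  · simp [padZero_of_le hm _ (Nat.le_of_not_lt hi)]

lemma extendBlocks_restrictBlocks_of_dependsOn {n : ℕ} {g : (∀ i, Fin n → K i) → F}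
    (hg : DependsOn g {i | (i : ℕ) < h}) : extendBlocks hm n (restrictBlocks hm n g) = g := by
  funext x
  exact hg fun i hi => padZero_of_lt hm _ hi

variable [CommRing F]

lemma IsLCC.preimage_restrictBlocks
    {D : ∀ n : ℕ, Set ((∀ i : Fin h, Fin n → K (Fin.castLE hm i)) → F)}
    (hD : IsLCC (fun i : Fin h => K (Fin.castLE hm i)) F D) :
    IsLCC K F (fun n => restrictBlocks hm n ⁻¹' D n) := by
  refine ⟨?_, fun n a b f g hf hg => hD.linComb_mem a b hf hg, fun n l g hg A => ?_⟩
  · obtain ⟨n, g, hg⟩ := hD.1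
    exact ⟨n, extendBlocks hm n g, by simpa [Set.mem_preimage, restrictBlocks_extendBlocks]⟩
  · simpa [Set.mem_preimage, restrictBlocks_comp_mulVec] using
      hD.comp_mulVec_mem hg fun i => A (Fin.castLE hm i)

lemma IsLCC.preimage_extendBlocks {D : ∀ n : ℕ, Set ((∀ i, Fin n → K i) → F)}
    (hD : IsLCC K F D) :
    IsLCC (fun i : Fin h => K (Fin.castLE hm i)) F (fun n => extendBlocks hm n ⁻¹' D n) := by
  refine ⟨?_, fun n a b f g hf hg => hD.linComb_mem a b hf hg, fun n l g hg A => ?_⟩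
  · obtain ⟨n, g, hg⟩ := hD.1
    exact ⟨n, fun _ => g 0, hD.const_mem hg n⟩
  · simpa [Set.mem_preimage, extendBlocks_comp_mulVec] using
      hD.comp_mulVec_mem hg (padZero hm (β := fun i => Matrix (Fin n) (Fin l) (K i)) A)

lemma restrictBlocks_mem_clgU {S : Set ((∀ i, Fin 1 → K i) → F)} {n : ℕ}
    {f : (∀ i, Fin n → K i) → F} (hf : f ∈ ClgU K F S n) :
    restrictBlocks hm n f ∈
      ClgU (fun i : Fin h => K (Fin.castLE hm i)) F (restrictBlocks hm 1 '' S) n :=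
  fun _ hD hS => hf _ (hD.preimage_restrictBlocks hm) fun g hg => hS ⟨g, hg, rfl⟩

lemma extendBlocks_mem_clgU {S : Set ((∀ i, Fin 1 → K i) → F)} {n : ℕ}
    {g : (∀ i : Fin h, Fin n → K (Fin.castLE hm i)) → F}
    (hg : g ∈ ClgU (fun i : Fin h => K (Fin.castLE hm i)) F (restrictBlocks hm 1 '' S) n) :
    extendBlocks hm n g ∈ ClgU K F S n := by
  refine fun _ hD hS => hg _ (hD.preimage_extendBlocks hm) ?_
  rintro _ ⟨g, hg, rfl⟩
  simpa [Set.mem_preimage, extendBlocks_restrictBlocks] using hD.comp_mulVec_mem (hS hg) _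

end Blocks

theorem restriction_clg_iff_general
    {m h : ℕ} (hm : h ≤ m) (K : Fin m → Type*) [∀ i, Field (K i)]
    (Fp : Type*) [Field Fp]
    (C : ∀ n : ℕ, Set ((∀ i, Fin n → K i) → Fp))
    {s : ℕ} (f : (∀ i : Fin m, Fin s → K i) → Fp)
    (hdep : ∀ i : Fin m,
      ((∃ x y : ∀ i, Fin s → K i, (∀ j, j ≠ i → x j = y j) ∧ f x ≠ f y) ↔ (i : ℕ) < h)) :
    letI res : ∀ n : ℕ, ((∀ i : Fin m, Fin n → K i) → Fp) →
        ((∀ i : Fin h, Fin n → K (Fin.castLE hm i)) → Fp) :=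
      fun n g y => g (fun i => if hi : (i : ℕ) < h then y ⟨(i : ℕ), hi⟩ else 0)
    (f ∈ ClgU K Fp (C 1) s ↔
      res s f ∈ ClgU (fun i : Fin h => K (Fin.castLE hm i)) Fp (res 1 '' C 1) s) := by
  have hf : DependsOn f {i | (i : ℕ) < h} :=
    dependsOn_of_forall_notMem fun i hi x y hxy =>
      not_not.1 fun hne => hi ((hdep i).1 ⟨x, y, hxy, hne⟩)
  show f ∈ _ ↔ restrictBlocks hm s f ∈ ClgU _ Fp (restrictBlocks hm 1 '' C 1) s
  refine ⟨restrictBlocks_mem_clgU hm, fun hres => ?_⟩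
  rw [← extendBlocks_restrictBlocks_of_dependsOn hm hf]
  exact extendBlocks_mem_clgU hm hres

/-- restriction lemma. Let `K₁ = ∏_{i<h} F_{qᵢ}` and let `C|_{K₁}` consist
of the restrictions of members of `C` obtained by setting the last `m - h` argument
blocks to zero. If `f` depends exactly on the argument blocks indexed by `[h]`, then
`f ∈ Clg(C^[1])^[s]` iff `f|_{K₁} ∈ Clg(C|_{K₁}^[1])^[s]`. -/
theorem restriction_clg_iff
    {m h : ℕ} (hm : h ≤ m) (K : Fin m → Type*) [∀ i, Field (K i)] [∀ i, Fintype (K i)]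
    (Fp : Type*) [Field Fp] [Fintype Fp]
    (C : ∀ n : ℕ, Set ((∀ i, Fin n → K i) → Fp)) (hC : IsLCC K Fp C)
    {s : ℕ} (f : (∀ i : Fin m, Fin s → K i) → Fp)
    (hdep : ∀ i : Fin m,
      ((∃ x y : ∀ i, Fin s → K i, (∀ j, j ≠ i → x j = y j) ∧ f x ≠ f y) ↔ (i : ℕ) < h)) :
    letI res : ∀ n : ℕ, ((∀ i : Fin m, Fin n → K i) → Fp) →
        ((∀ i : Fin h, Fin n → K (Fin.castLE hm i)) → Fp) :=
      fun n g y => g (fun i => if hi : (i : ℕ) < h then y ⟨(i : ℕ), hi⟩ else 0)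
    (f ∈ ClgU K Fp (C 1) s ↔
      res s f ∈ ClgU (fun i : Fin h => K (Fin.castLE hm i)) Fp (res 1 '' C 1) s) :=
  restriction_clg_iff_general hm K Fp C f hdep
end
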